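/- Let n ≥ 1, let W be a random variable on a probability space with P(W > 0) = 1 and E[W^{−n/2}] < ∞, and let ρ ∈ ℝ satisfy e^{nρ}·(2π)^{n/2} ≤ E[W^{−n/2}]. Define h : ℝⁿ → ℝ by h(ξ) = e^{nρ}·(2π)^{n/2}·E[e^{−2π²|ξ|²W}]/E[W^{−n/2}]. Then e^{−nρ}·∫_{ℝⁿ} h(ξ)² dξ ≤ 2^{−n/2}. -/

import Mathlib

/-!
Write `h = (c / M) g` with `c = e^{nρ} (2π)^{n/2}`, `M = E[W^{-n/2}]` and
`g(ξ) = E[exp(-2π²|ξ|²W)]`. Jensen gives `g(ξ)² ≤ E[exp(-4π²|ξ|²W)]`; integrating in `ξ` first,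
the Gaussian integral `∫ exp(-4π²w|ξ|²) dξ = (4π)^{-n/2} w^{-n/2}` turns the right-hand side
into `(4π)^{-n/2} M`. Hence `e^{-nρ} ∫ h² ≤ 2^{-n/2} c / M ≤ 2^{-n/2}`.
-/

open MeasureTheory Real Module
open scoped ENNReal

theorem sq_integral_le_integral_sq {Ω : Type*} [MeasurableSpace Ω] {μ : Measure Ω}
    [IsProbabilityMeasure μ] {X : Ω → ℝ} (hX : MemLp X 2 μ) :
    (∫ ω, X ω ∂μ) ^ 2 ≤ ∫ ω, X ω ^ 2 ∂μ := by
  have h := ProbabilityTheory.variance_nonneg X μ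
  rw [ProbabilityTheory.variance_eq_sub hX] at h
  simpa only [Pi.pow_apply, sub_nonneg] using h

section GaussianMixture

variable {V : Type*} [NormedAddCommGroup V] [InnerProductSpace ℝ V] [FiniteDimensional ℝ V]
  [MeasurableSpace V] [BorelSpace V]

theorem lintegral_ofReal_rexp_neg_mul_sq_norm {b : ℝ} (hb : 0 < b) :
    ∫⁻ v : V, ENNReal.ofReal (rexp (-b * ‖v‖ ^ 2)) =
      ENNReal.ofReal ((π / b) ^ (finrank ℝ V / 2 : ℝ)) := by
  have hI := GaussianFourier.integral_rexp_neg_mul_sq_norm (V := V) hb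
  have hint : Integrable fun v : V ↦ rexp (-b * ‖v‖ ^ 2) :=
    .of_integral_ne_zero (by rw [hI]; positivity)
  rw [← hI, ofReal_integral_eq_lintegral_ofReal hint (ae_of_all _ fun _ ↦ (exp_pos _).le)]

variable {Ω : Type*} [MeasurableSpace Ω] {μ : Measure Ω} {W : Ω → ℝ}

theorem memLp_rexp_mul_of_nonpos [IsFiniteMeasure μ] (hW : Measurable W)
    (hW_nonneg : ∀ᵐ ω ∂μ, 0 ≤ W ω) {c : ℝ} (hc : c ≤ 0) (p : ℝ≥0∞) :
    MemLp (fun ω ↦ rexp (c * W ω)) p μ := by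
  refine .of_bound (by fun_prop) 1 ?_
  filter_upwards [hW_nonneg] with ω hω
  rw [norm_of_nonneg (exp_pos _).le, exp_le_one_iff]
  exact mul_nonpos_of_nonpos_of_nonneg hc hω

theorem lintegral_lintegral_rexp_neg_mul_sq_norm_mul [SFinite μ] (hW : Measurable W)
    (hW_pos : ∀ᵐ ω ∂μ, 0 < W ω) {b : ℝ} (hb : 0 < b) :
    ∫⁻ v : V, ∫⁻ ω, ENNReal.ofReal (rexp (-b * ‖v‖ ^ 2 * W ω)) ∂μ =
      ENNReal.ofReal ((π / b) ^ (finrank ℝ V / 2 : ℝ)) *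
        ∫⁻ ω, ENNReal.ofReal (W ω ^ (-(finrank ℝ V : ℝ) / 2)) ∂μ := by
  rw [lintegral_lintegral_swap (by fun_prop), ← lintegral_const_mul' _ _ ENNReal.ofReal_ne_top]
  refine lintegral_congr_ae ?_
  filter_upwards [hW_pos] with ω hω
  have hexp (v : V) : -b * ‖v‖ ^ 2 * W ω = -(b * W ω) * ‖v‖ ^ 2 := by ring
  simp_rw [hexp, lintegral_ofReal_rexp_neg_mul_sq_norm (mul_pos hb hω)]
  rw [← ENNReal.ofReal_mul (by positivity), div_mul_eq_div_div, div_eq_mul_inv (π / b),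
    mul_rpow (by positivity) (by positivity), inv_rpow hω.le, ← rpow_neg hω.le, neg_div]

theorem integral_sq_integral_rexp_neg_mul_sq_norm_mul_le [IsProbabilityMeasure μ]
    (hW : Measurable W) (hW_pos : ∀ᵐ ω ∂μ, 0 < W ω)
    (hW_int : Integrable (fun ω ↦ W ω ^ (-(finrank ℝ V : ℝ) / 2)) μ) {b : ℝ} (hb : 0 < b) :
    ∫ v : V, (∫ ω, rexp (-b * ‖v‖ ^ 2 * W ω) ∂μ) ^ 2 ≤
      (π / (2 * b)) ^ (finrank ℝ V / 2 : ℝ) * ∫ ω, W ω ^ (-(finrank ℝ V : ℝ) / 2) ∂μ := by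
  have hW_nonneg : ∀ᵐ ω ∂μ, 0 ≤ W ω := hW_pos.mono fun _ ↦ le_of_lt
  have hjensen (v : V) : ENNReal.ofReal ((∫ ω, rexp (-b * ‖v‖ ^ 2 * W ω) ∂μ) ^ 2) ≤
      ∫⁻ ω, ENNReal.ofReal (rexp (-(2 * b) * ‖v‖ ^ 2 * W ω)) ∂μ := by
    have hc : -b * ‖v‖ ^ 2 ≤ 0 := by nlinarith [sq_nonneg ‖v‖]
    have hsq (ω : Ω) : rexp (-b * ‖v‖ ^ 2 * W ω) ^ 2 = rexp (-(2 * b) * ‖v‖ ^ 2 * W ω) := by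
      rw [← exp_nat_mul]; push_cast; ring_nf
    rw [← ofReal_integral_eq_lintegral_ofReal
      ((memLp_rexp_mul_of_nonpos hW hW_nonneg (by linarith) 1).integrable le_rfl)
      (ae_of_all _ fun _ ↦ (exp_pos _).le)]
    gcongr
    simpa only [hsq] using
      sq_integral_le_integral_sq (memLp_rexp_mul_of_nonpos hW hW_nonneg hc 2)
  have hmixture : ∫⁻ v : V, ∫⁻ ω, ENNReal.ofReal (rexp (-(2 * b) * ‖v‖ ^ 2 * W ω)) ∂μ =
      ENNReal.ofReal ((π / (2 * b)) ^ (finrank ℝ V / 2 : ℝ) *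
        ∫ ω, W ω ^ (-(finrank ℝ V : ℝ) / 2) ∂μ) := by
    rw [lintegral_lintegral_rexp_neg_mul_sq_norm_mul hW hW_pos (by positivity),
      ← ofReal_integral_eq_lintegral_ofReal hW_int
        (hW_nonneg.mono fun _ hω ↦ rpow_nonneg hω _),
      ← ENNReal.ofReal_mul (by positivity)]
  calc ∫ v : V, (∫ ω, rexp (-b * ‖v‖ ^ 2 * W ω) ∂μ) ^ 2
      ≤ (∫⁻ v : V, ENNReal.ofReal ‖(∫ ω, rexp (-b * ‖v‖ ^ 2 * W ω) ∂μ) ^ 2‖).toReal :=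
        (le_norm_self _).trans (norm_integral_le_lintegral_norm _)
    _ ≤ (∫⁻ v : V, ∫⁻ ω, ENNReal.ofReal (rexp (-(2 * b) * ‖v‖ ^ 2 * W ω)) ∂μ).toReal := by
        refine ENNReal.toReal_mono (hmixture ▸ ENNReal.ofReal_ne_top) (lintegral_mono fun v ↦ ?_)
        simpa only [norm_of_nonneg (sq_nonneg _)] using hjensen v
    _ = _ := by
        rw [hmixture, ENNReal.toReal_ofReal]
        exact mul_nonneg (by positivity) (integral_nonneg_of_ae
          (hW_nonneg.mono fun _ hω ↦ rpow_nonneg hω _))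

end GaussianMixture

theorem normal_variance_mixture_global_repulsion (n : ℕ)
    (Ω : Type*) [MeasurableSpace Ω] (μ : Measure Ω) [IsProbabilityMeasure μ]
    (W : Ω → ℝ) (hW_meas : Measurable W)
    (hW_pos : μ {ω | 0 < W ω} = 1)
    (hW_int : Integrable (fun ω => W ω ^ (-(n : ℝ) / 2)) μ)
    (ρ : ℝ)
    (hρ : Real.exp (n * ρ) * (2 * π) ^ ((n : ℝ) / 2) ≤ ∫ ω, W ω ^ (-(n : ℝ) / 2) ∂μ)
    (h : EuclideanSpace ℝ (Fin n) → ℝ)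
    (hh : ∀ ξ : EuclideanSpace ℝ (Fin n),
      h ξ = Real.exp (n * ρ) * (2 * π) ^ ((n : ℝ) / 2) *
        (∫ ω, Real.exp (-2 * π ^ 2 * ‖ξ‖ ^ 2 * W ω) ∂μ) /
        ∫ ω, W ω ^ (-(n : ℝ) / 2) ∂μ) :
    Real.exp (-(n * ρ)) * (∫ ξ : EuclideanSpace ℝ (Fin n), h ξ ^ 2) ≤
      (2 : ℝ) ^ (-(n : ℝ) / 2) := by
  set M := ∫ ω, W ω ^ (-(n : ℝ) / 2) ∂μ
  set s : ℝ := (n : ℝ) / 2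
  have hM : 0 < M := lt_of_lt_of_le (by positivity) hρ
  have hW_ae_pos : ∀ᵐ ω ∂μ, 0 < W ω :=
    (ae_iff_measure_eq (measurableSet_lt measurable_const hW_meas).nullMeasurableSet).2
      (by rw [hW_pos, measure_univ])
  have hg := integral_sq_integral_rexp_neg_mul_sq_norm_mul_le (V := EuclideanSpace ℝ (Fin n))
    hW_meas hW_ae_pos (by simpa using hW_int) (by positivity : 0 < 2 * π ^ 2)
  rw [finrank_euclideanSpace_fin, neg_mul_eq_neg_mul] at hg
  have hconst : (2 * π) ^ s * (π / (2 * (2 * π ^ 2))) ^ s = (2 : ℝ) ^ (-(n : ℝ) / 2) := by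
    rw [← mul_rpow (by positivity) (by positivity), neg_div, rpow_neg two_pos.le,
      ← inv_rpow two_pos.le]
    congr 1
    field_simp
  simp_rw [hh, div_pow, mul_pow, integral_div, integral_const_mul]
  calc rexp (-(n * ρ)) * (rexp (n * ρ) ^ 2 * ((2 * π) ^ s) ^ 2 *
        (∫ ξ : EuclideanSpace ℝ (Fin n), (∫ ω, rexp (-2 * π ^ 2 * ‖ξ‖ ^ 2 * W ω) ∂μ) ^ 2) / M ^ 2)
      ≤ rexp (-(n * ρ)) * (rexp (n * ρ) ^ 2 * ((2 * π) ^ s) ^ 2 *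
        ((π / (2 * (2 * π ^ 2))) ^ s * M) / M ^ 2) := by gcongr
    _ = (2 * π) ^ s * (π / (2 * (2 * π ^ 2))) ^ s * (rexp (n * ρ) * (2 * π) ^ s / M) := by
        rw [exp_neg]; field_simp
    _ ≤ (2 : ℝ) ^ (-(n : ℝ) / 2) := by
        rw [hconst]
        exact mul_le_of_le_one_right (by positivity) ((div_le_one hM).2 hρ)
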